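/- arXiv:math/0503574 — 3 statements merged into one kernel-verified Lean document; each statement's English description precedes it below -/
import Mathlib

section
/- Let H be a real Hilbert space and L : H × H → ℝ ∪ {+∞} an anti-selfdual Lagrangian that is uniformly convex in both variables. Suppose u, x : [0,T] → H are continuous paths and v : [0,T] → H is a path such that −x(t) ∈ ∂₂L(u(t), v(t)) for almost every t ∈ [0,T]. Then there is a continuous path w : [0,T] → H with w(t) = v(t) for almost every t and −x(t) ∈ ∂₂L(u(t), w(t)) for every t ∈ [0,T]. -/
open scoped RealInnerProductSpace NNReal

noncomputable section

/-- Convexity for `EReal`-valued functions. -/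
def ERealConvexOn {E : Type*} [AddCommGroup E] [Module ℝ E] (f : E → EReal) : Prop :=
  ∀ x y : E, ∀ s t : ℝ, 0 ≤ s → 0 ≤ t → s + t = 1 →
    f (s • x + t • y) ≤ (s : EReal) * f x + (t : EReal) * f y

/-- The Legendre–Fenchel dual, in both variables, of a Lagrangian on `H × H`. -/
def lagrangianDualH {H : Type*} [NormedAddCommGroup H] [InnerProductSpace ℝ H]
    (L : H × H → EReal) (q y : H) : EReal :=
  ⨆ x : H, ⨆ p : H, ((⟪q, x⟫ + ⟪y, p⟫ : ℝ) : EReal) - L (x, p)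

/-- A Lagrangian on a Hilbert space is anti-selfdual if `L*(p,x) = L(−x,−p)`. -/
def IsASDH {H : Type*} [NormedAddCommGroup H] [InnerProductSpace ℝ H]
    (L : H × H → EReal) : Prop :=
  ∀ p x : H, lagrangianDualH L p x = L (-x, -p)

/-- `(q,y) ∈ ∂L(x,p)`, the subdifferential of the Lagrangian `L` at `(x,p)`. -/
def MemSubdiff {H : Type*} [NormedAddCommGroup H] [InnerProductSpace ℝ H]
    (L : H × H → EReal) (x p q y : H) : Prop :=
  ∀ z r : H, L (x, p) + ((⟪q, z - x⟫ + ⟪y, r - p⟫ : ℝ) : EReal) ≤ L (z, r)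

/-- `y ∈ ∂₂L(u,v)`, the subdifferential in the second variable. -/
def MemSubdiff2 {H : Type*} [NormedAddCommGroup H] [InnerProductSpace ℝ H]
    (L : H × H → EReal) (u v y : H) : Prop :=
  ∀ r : H, L (u, v) + ((⟪y, r - v⟫ : ℝ) : EReal) ≤ L (u, r)

/-- `q ∈ ∂₁L(x,p)`, the subdifferential in the first variable. -/
def MemSubdiff1 {H : Type*} [NormedAddCommGroup H] [InnerProductSpace ℝ H]
    (L : H × H → EReal) (x p q : H) : Prop :=
  ∀ z : H, L (x, p) + ((⟪q, z - x⟫ : ℝ) : EReal) ≤ L (z, p)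

/-- The `λ`-regularization of a Lagrangian:
`L_λ(x,p) = inf_z { L(z,p) + ‖x−z‖²/(2λ) } + (λ/2)‖p‖²`. -/
def lagReg {H : Type*} [NormedAddCommGroup H] [InnerProductSpace ℝ H]
    (lam : ℝ) (L : H × H → EReal) (x p : H) : EReal :=
  (⨅ z : H, L (z, p) + ((‖x - z‖ ^ 2 / (2 * lam) : ℝ) : EReal))
    + ((lam / 2 * ‖p‖ ^ 2 : ℝ) : EReal)

open MeasureTheory

/-!
Anti-selfduality yields the Fenchel–Young bound `L (x, p) ≥ -⟪x, p⟫`. Uniform convexity along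
segments issuing from a point of the domain upgrades it to quadratic growth
`L ≥ ε/4 (‖x‖² + ‖p‖²) - C`, and dualising back through `L (x, p) = L* (-p, -x)` gives a quadratic
upper bound. Hence `L` is finite, convex and locally Lipschitz. Now `-y ∈ ∂₂L (a, v)` says exactly
that `v` minimises the `ε`-strongly convex function `r ↦ L (a, r) + ⟪y, r⟫`. Its unique minimiser
`W (a, y)` depends continuously on `(a, y)`, since comparing the minimisers of two such functions
gives `‖ΔW‖² ≲ ‖Δ(a, y)‖`; so `t ↦ W (u t, x t)` is the continuous version of `v`.
-/

open Set Metric Filter Topology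

section ERealConvex

variable {E : Type*} [AddCommGroup E] [Module ℝ E]

lemma erealConvexOn_coe_iff {f : E → ℝ} :
    ERealConvexOn (fun x => (f x : EReal)) ↔ ConvexOn ℝ univ f := by
  simp only [ERealConvexOn, ConvexOn, convex_univ, mem_univ, forall_const, true_and,
    smul_eq_mul]
  norm_cast

lemma ERealConvexOn.le_coe {f : E → EReal} (hf : ERealConvexOn f) {x y : E} {a b s t : ℝ}
    (hx : f x = a) (hy : f y = b) (hs : 0 ≤ s) (ht : 0 ≤ t) (hst : s + t = 1) :
    f (s • x + t • y) ≤ ((s * a + t * b : ℝ) : EReal) := by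
  simpa [hx, hy] using hf x y s t hs ht hst

end ERealConvex

lemma sq_norm_smul_add_smul_le {E : Type*} [SeminormedAddCommGroup E] [NormedSpace ℝ E]
    (x y : E) {s t : ℝ} (hs : 0 ≤ s) (ht : 0 ≤ t) :
    ‖s • x + t • y‖ ^ 2 ≤ 2 * s ^ 2 * ‖x‖ ^ 2 + 2 * t ^ 2 * ‖y‖ ^ 2 := by
  have h := norm_add_le (s • x) (t • y)
  rw [norm_smul, norm_smul, Real.norm_of_nonneg hs, Real.norm_of_nonneg ht] at h
  nlinarith [norm_nonneg (s • x + t • y), sq_nonneg (s * ‖x‖ - t * ‖y‖)]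

section Product

variable {E F : Type*} [SeminormedAddCommGroup E] [NormedSpace ℝ E]
  [SeminormedAddCommGroup F] [NormedSpace ℝ F]

lemma ERealConvexOn.exists_lower_bound_of_neg_quadratic {f : E × F → EReal}
    (hf : ERealConvexOn f) {z₀ : E × F} (hz₀ : f z₀ ≠ ⊤) {c δ : ℝ} (hc : 0 ≤ c) (hδ : 0 < δ)
    (hlow : ∀ z, ((-(c * (‖z.1‖ ^ 2 + ‖z.2‖ ^ 2)) : ℝ) : EReal) ≤ f z) :
    ∃ C, ∀ z, ((-(δ * (‖z.1‖ ^ 2 + ‖z.2‖ ^ 2)) - C : ℝ) : EReal) ≤ f z := by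
  have hne_bot : ∀ z, f z ≠ ⊥ := fun z => ((EReal.bot_lt_coe _).trans_le (hlow z)).ne'
  set t := δ / (2 * c + δ) with ht_def
  have ht : 0 < t := by positivity
  have ht1 : t ≤ 1 := by rw [div_le_one (by positivity)]; linarith
  have hct : 2 * c * t ≤ δ := by
    rw [ht_def, mul_div_assoc', div_le_iff₀ (by positivity)]; nlinarith
  set a₀ := (f z₀).toReal
  refine ⟨(2 * c * (‖z₀.1‖ ^ 2 + ‖z₀.2‖ ^ 2) + |a₀|) / t, fun z => ?_⟩
  rcases eq_or_ne (f z) ⊤ with hz | hz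
  · simp [hz]
  set a := (f z).toReal
  have ha : f z = a := (EReal.coe_toReal hz (hne_bot z)).symm
  -- On the segment from `z₀` to `z` at parameter `t`, convexity gains a factor `t` while the
  -- quadratic lower bound only costs `t²`.
  have hseg := (hlow _).trans
    (hf.le_coe (s := 1 - t) (EReal.coe_toReal hz₀ (hne_bot z₀)).symm ha (by linarith) ht.le
      (by ring))
  rw [EReal.coe_le_coe_iff] at hseg
  simp only [Prod.fst_add, Prod.snd_add, Prod.smul_fst, Prod.smul_snd] at hseg
  have h1 := sq_norm_smul_add_smul_le z₀.1 z.1 (by linarith : 0 ≤ 1 - t) ht.le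
  have h2 := sq_norm_smul_add_smul_le z₀.2 z.2 (by linarith : 0 ≤ 1 - t) ht.le
  have hs2 : (1 - t) ^ 2 ≤ 1 := by nlinarith
  have key : t * -(δ * (‖z.1‖ ^ 2 + ‖z.2‖ ^ 2)) - (2 * c * (‖z₀.1‖ ^ 2 + ‖z₀.2‖ ^ 2) + |a₀|)
      ≤ t * a := by
    nlinarith [le_abs_self a₀, neg_abs_le a₀, mul_le_mul_of_nonneg_left hs2 hc,
      mul_nonneg hc (add_nonneg (sq_nonneg ‖z₀.1‖) (sq_nonneg ‖z₀.2‖)),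
      mul_le_mul_of_nonneg_right hct
        (mul_nonneg ht.le (add_nonneg (sq_nonneg ‖z.1‖) (sq_nonneg ‖z.2‖)))]
  rw [ha, EReal.coe_le_coe_iff, sub_le_iff_le_add, ← sub_le_iff_le_add', le_div_iff₀ ht]
  linarith

end Product

section Lagrangian

variable {H : Type*} [NormedAddCommGroup H] [InnerProductSpace ℝ H] {L : H × H → EReal}

lemma IsASDH.neg_inner_le (hL : IsASDH L) (z : H × H) : ((-⟪z.1, z.2⟫ : ℝ) : EReal) ≤ L z := by
  have hdual := hL (-z.2) (-z.1)
  simp only [neg_neg, Prod.mk.eta] at hdual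
  -- Fenchel–Young, read through `L* (-z.2, -z.1) = L z`
  have hFY : (((⟪-z.2, z.1⟫ + ⟪-z.1, z.2⟫ : ℝ)) : EReal) - L z ≤ L z :=
    (le_iSup₂_of_le (f := fun x p => ((⟪-z.2, x⟫ + ⟪-z.1, p⟫ : ℝ) : EReal) - L (x, p))
      z.1 z.2 le_rfl).trans hdual.le
  rw [inner_neg_left, inner_neg_left, real_inner_comm z.1 z.2] at hFY
  induction h : L z using EReal.rec with
  | bot => rw [h, EReal.coe_sub_bot] at hFY; exact absurd hFY (by simp)
  | top => exact le_top
  | coe a =>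
    rw [h, ← EReal.coe_sub, EReal.coe_le_coe_iff] at hFY
    exact EReal.coe_le_coe_iff.2 (by linarith)

lemma IsASDH.exists_quadratic_lower_bound (hL : IsASDH L) (hproper : ∃ z, L z ≠ ⊤)
    {ε : ℝ} (hε : 0 < ε)
    (hunif : ERealConvexOn (fun zp : H × H =>
      L zp - ((ε / 2 * (‖zp.1‖ ^ 2 + ‖zp.2‖ ^ 2) : ℝ) : EReal))) :
    ∃ C, ∀ z, ((ε / 4 * (‖z.1‖ ^ 2 + ‖z.2‖ ^ 2) - C : ℝ) : EReal) ≤ L z := by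
  obtain ⟨z₀, hz₀⟩ := hproper
  have hlow : ∀ z : H × H, ((-((1 + ε) / 2 * (‖z.1‖ ^ 2 + ‖z.2‖ ^ 2)) : ℝ) : EReal)
      ≤ L z - ((ε / 2 * (‖z.1‖ ^ 2 + ‖z.2‖ ^ 2) : ℝ) : EReal) := by
    intro z
    have hinner : -⟪z.1, z.2⟫ ≥ -((‖z.1‖ ^ 2 + ‖z.2‖ ^ 2) / 2) := by
      nlinarith [real_inner_le_norm z.1 z.2, sq_nonneg (‖z.1‖ - ‖z.2‖)]
    calc ((-((1 + ε) / 2 * (‖z.1‖ ^ 2 + ‖z.2‖ ^ 2)) : ℝ) : EReal)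
        = ((-((‖z.1‖ ^ 2 + ‖z.2‖ ^ 2) / 2) : ℝ) : EReal)
          - ((ε / 2 * (‖z.1‖ ^ 2 + ‖z.2‖ ^ 2) : ℝ) : EReal) := by
          rw [← EReal.coe_sub]; ring_nf
      _ ≤ L z - ((ε / 2 * (‖z.1‖ ^ 2 + ‖z.2‖ ^ 2) : ℝ) : EReal) :=
          EReal.sub_le_sub ((EReal.coe_le_coe_iff.2 hinner).trans (hL.neg_inner_le z)) le_rfl
  have hz₀' : L z₀ - ((ε / 2 * (‖z₀.1‖ ^ 2 + ‖z₀.2‖ ^ 2) : ℝ) : EReal) ≠ ⊤ := by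
    rw [← EReal.coe_toReal hz₀ ((EReal.bot_lt_coe _).trans_le (hL.neg_inner_le z₀)).ne',
      ← EReal.coe_sub]
    exact EReal.coe_ne_top _
  obtain ⟨C, hC⟩ := hunif.exists_lower_bound_of_neg_quadratic hz₀' (by positivity)
    (by positivity : 0 < ε / 4) hlow
  refine ⟨C, fun z => ?_⟩
  have h := hC z
  rw [EReal.le_sub_iff_add_le (Or.inl (EReal.coe_ne_bot _)) (Or.inl (EReal.coe_ne_top _)),
    ← EReal.coe_add] at h
  exact le_trans (le_of_eq (by ring_nf)) h

lemma lagrangianDualH_le_of_quadratic_lower_bound {ε C : ℝ} (hε : 0 < ε)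
    (hlow : ∀ z, ((ε / 4 * (‖z.1‖ ^ 2 + ‖z.2‖ ^ 2) - C : ℝ) : EReal) ≤ L z) (q y : H) :
    lagrangianDualH L q y ≤ (((‖q‖ ^ 2 + ‖y‖ ^ 2) / ε + C : ℝ) : EReal) := by
  have young : ∀ (v w : H), ⟪v, w⟫ ≤ ‖v‖ ^ 2 / ε + ε / 4 * ‖w‖ ^ 2 := by
    intro v w
    have h : ‖v‖ * ‖w‖ ≤ ‖v‖ ^ 2 / ε + ε / 4 * ‖w‖ ^ 2 := by
      rw [div_add' _ _ _ hε.ne', le_div_iff₀ hε]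
      nlinarith [sq_nonneg (‖v‖ - ε / 2 * ‖w‖)]
    exact (real_inner_le_norm v w).trans h
  refine iSup₂_le fun a b => (EReal.sub_le_sub le_rfl (hlow (a, b))).trans ?_
  rw [← EReal.coe_sub, EReal.coe_le_coe_iff, add_div]
  dsimp only
  linarith [young q a, young y b]

lemma IsASDH.le_of_quadratic_lower_bound (hL : IsASDH L) {ε C : ℝ} (hε : 0 < ε)
    (hlow : ∀ z, ((ε / 4 * (‖z.1‖ ^ 2 + ‖z.2‖ ^ 2) - C : ℝ) : EReal) ≤ L z) (z : H × H) :
    L z ≤ (((‖z.1‖ ^ 2 + ‖z.2‖ ^ 2) / ε + C : ℝ) : EReal) := by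
  have hdual := hL (-z.2) (-z.1)
  simp only [neg_neg, Prod.mk.eta] at hdual
  rw [← hdual, add_comm (‖z.1‖ ^ 2)]
  simpa only [norm_neg] using lagrangianDualH_le_of_quadratic_lower_bound hε hlow (-z.2) (-z.1)

end Lagrangian

lemma continuousAt_of_eventually_dist_sq_le {X Y : Type*} [PseudoMetricSpace X]
    [PseudoMetricSpace Y] {g : X → Y} {x₀ : X} (c : ℝ)
    (h : ∀ᶠ x in 𝓝 x₀, dist (g x) (g x₀) ^ 2 ≤ c * dist x x₀) : ContinuousAt g x₀ := by
  rw [ContinuousAt, tendsto_iff_dist_tendsto_zero]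
  have hlim : Tendsto (fun x => √(c * dist x x₀)) (𝓝 x₀) (𝓝 0) := by
    have hcont : Continuous fun x => √(c * dist x x₀) := by fun_prop
    simpa using hcont.tendsto x₀
  refine squeeze_zero' (Eventually.of_forall fun _ => dist_nonneg) ?_ hlim
  filter_upwards [h] with x hx
  exact Real.le_sqrt_of_sq_le hx

lemma continuous_of_forall_lipschitzOnWith_ball {X Y : Type*} [SeminormedAddCommGroup X]
    [PseudoMetricSpace Y] {f : X → Y} (h : ∀ ρ, ∃ K, LipschitzOnWith K f (ball 0 ρ)) :
    Continuous f := by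
  refine continuous_iff_continuousAt.2 fun x => ?_
  obtain ⟨K, hK⟩ := h (‖x‖ + 1)
  exact hK.continuousOn.continuousAt (isOpen_ball.mem_nhds (by simp))

section StrongConvex

variable {G : Type*} [NormedAddCommGroup G] [NormedSpace ℝ G] {f g : G → ℝ} {m : ℝ}

lemma StrongConvexOn.apply_midpoint_add_le (hf : StrongConvexOn univ m f) (x y : G) :
    f ((1 / 2 : ℝ) • x + (1 / 2 : ℝ) • y) + m / 8 * ‖x - y‖ ^ 2 ≤ (f x + f y) / 2 := by
  have h := hf.2 (mem_univ x) (mem_univ y) (by norm_num : (0 : ℝ) ≤ 1 / 2)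
    (by norm_num : (0 : ℝ) ≤ 1 / 2) (by norm_num)
  simp only [smul_eq_mul] at h
  linarith

lemma StrongConvexOn.sq_norm_sub_le_of_isMinOn (hf : StrongConvexOn univ m f) {x : G}
    (hx : IsMinOn f univ x) (y : G) : m / 4 * ‖y - x‖ ^ 2 ≤ f y - f x := by
  have h := hf.apply_midpoint_add_le x y
  have hmin := isMinOn_univ_iff.1 hx ((1 / 2 : ℝ) • x + (1 / 2 : ℝ) • y)
  rw [norm_sub_rev]
  linarith

lemma StrongConvexOn.sq_norm_sub_le_of_isMinOn_of_isMinOn (hf : StrongConvexOn univ m f)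
    (hg : StrongConvexOn univ m g) {x y : G} (hx : IsMinOn f univ x) (hy : IsMinOn g univ y) :
    m / 2 * ‖x - y‖ ^ 2 ≤ (g x - f x) - (g y - f y) := by
  have h₁ := hf.sq_norm_sub_le_of_isMinOn hx y
  have h₂ := hg.sq_norm_sub_le_of_isMinOn hy x
  rw [norm_sub_rev] at h₁
  linarith

lemma StrongConvexOn.exists_isMinOn [CompleteSpace G] (hf : StrongConvexOn univ m f)
    (hm : 0 < m) (hcont : Continuous f) (hbdd : BddBelow (range f)) :
    ∃ x, IsMinOn f univ x := by
  set I := ⨅ x, f x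
  have hI : ∀ x, I ≤ f x := ciInf_le hbdd
  have hseq : ∀ n : ℕ, ∃ x, f x < I + 1 / (n + 1) := fun n =>
    exists_lt_of_ciInf_lt (lt_add_of_pos_right I (by positivity))
  choose z hz using hseq
  -- the midpoint of two `δ`-minimizers is no lower than `I`, so they are `√(8δ/m)`-close
  have hclose : ∀ n k N : ℕ, N ≤ n → N ≤ k → ‖z n - z k‖ ^ 2 ≤ 8 / m * (1 / (N + 1)) := by
    intro n k N hn hk
    have hmid := hf.apply_midpoint_add_le (z n) (z k)
    have hlow := hI ((1 / 2 : ℝ) • z n + (1 / 2 : ℝ) • z k)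
    have hn' : (1 : ℝ) / (n + 1) ≤ 1 / (N + 1) := by gcongr
    have hk' : (1 : ℝ) / (k + 1) ≤ 1 / (N + 1) := by gcongr
    rw [div_mul_eq_mul_div, le_div_iff₀ hm]
    linarith [hz n, hz k]
  have hcauchy : CauchySeq z := by
    refine cauchySeq_of_le_tendsto_0 (fun N : ℕ => √(8 / m * (1 / (N + 1)))) (fun n k N hn hk =>
      dist_eq_norm (z n) (z k) ▸ Real.le_sqrt_of_sq_le (hclose n k N hn hk)) ?_
    simpa using ((tendsto_one_div_add_atTop_nhds_zero_nat.const_mul (8 / m)).sqrt)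
  obtain ⟨x, hx⟩ := cauchySeq_tendsto_of_complete hcauchy
  have hfx : f x ≤ I := le_of_tendsto_of_tendsto' ((hcont.tendsto x).comp hx)
    (by simpa using tendsto_one_div_add_atTop_nhds_zero_nat.const_add I) fun n => (hz n).le
  exact ⟨x, fun y _ => hfx.trans (hI y)⟩

end StrongConvex

section TiltedSlice

variable {E F : Type*} [NormedAddCommGroup F] [InnerProductSpace ℝ F] {ℓ : E × F → ℝ}

def tiltedSlice (ℓ : E × F → ℝ) (p : E × F) (r : F) : ℝ := ℓ (p.1, r) + ⟪p.2, r⟫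

lemma strongConvexOn_tiltedSlice [SeminormedAddCommGroup E] [NormedSpace ℝ E] {m : ℝ}
    (h : ConvexOn ℝ univ fun z : E × F => ℓ z - m / 2 * (‖z.1‖ ^ 2 + ‖z.2‖ ^ 2)) (p : E × F) :
    StrongConvexOn univ m (tiltedSlice ℓ p) := by
  rw [strongConvexOn_iff_convex]
  refine ⟨convex_univ, fun r _ r' _ s t hs ht hst => ?_⟩
  have h' := h.2 (mem_univ (p.1, r)) (mem_univ (p.1, r')) hs ht hst
  have hp : s • p.1 + t • p.1 = p.1 := by rw [← add_smul, hst, one_smul]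
  simp only [Prod.smul_mk, Prod.mk_add_mk, hp, smul_eq_mul] at h' ⊢
  simp only [tiltedSlice, inner_add_right, inner_smul_right]
  obtain rfl : t = 1 - s := by linarith
  linarith

lemma continuous_tiltedSlice [TopologicalSpace E] (hℓ : Continuous ℓ) (p : E × F) :
    Continuous (tiltedSlice ℓ p) :=
  (hℓ.comp (continuous_const.prodMk continuous_id)).add (continuous_const.inner continuous_id)

lemma bddBelow_range_tiltedSlice {c C : ℝ} (hc : 0 < c) (hcoer : ∀ z, c * ‖z.2‖ ^ 2 - C ≤ ℓ z)
    (p : E × F) : BddBelow (range (tiltedSlice ℓ p)) := by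
  refine ⟨-C - ‖p.2‖ ^ 2 / (4 * c), ?_⟩
  rintro _ ⟨r, rfl⟩
  have hinner := (abs_le.1 (abs_real_inner_le_norm p.2 r)).1
  have hsq : ‖p.2‖ * ‖r‖ - c * ‖r‖ ^ 2 ≤ ‖p.2‖ ^ 2 / (4 * c) := by
    rw [le_div_iff₀ (by positivity)]
    nlinarith [sq_nonneg (‖p.2‖ - 2 * c * ‖r‖)]
  have := hcoer (p.1, r)
  simp only [tiltedSlice] at this ⊢
  linarith

lemma exists_bound_of_isMinOn_tiltedSlice [SeminormedAddCommGroup E] {c C : ℝ} (hc : 0 < c)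
    (hcoer : ∀ z, c * ‖z.2‖ ^ 2 - C ≤ ℓ z) (hlip : ∀ ρ, ∃ K, LipschitzOnWith K ℓ (ball 0 ρ))
    {W : E × F → F} (hW : ∀ p, IsMinOn (tiltedSlice ℓ p) univ (W p)) (ρ : ℝ) :
    ∃ R, ∀ p : E × F, ‖p‖ < ρ → ‖W p‖ ≤ R := by
  obtain ⟨K, hK⟩ := hlip ρ
  set D := ℓ 0 + K * ρ + C
  refine ⟨1 + (|ρ| + |D|) / c, fun p hp => ?_⟩
  have hρ : 0 < ρ := (norm_nonneg p).trans_lt hp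
  have hmem : (p.1, (0 : F)) ∈ ball (0 : E × F) ρ := by
    simpa [Prod.norm_def] using (norm_fst_le p).trans_lt hp
  have hℓ : ℓ (p.1, 0) ≤ ℓ 0 + K * ρ := by
    have := hK.dist_le_mul _ hmem 0 (mem_ball_self hρ)
    rw [Real.dist_eq, dist_zero_right] at this
    nlinarith [(abs_le.1 this).2, mem_ball_zero_iff.1 hmem, K.2]
  have hmin := isMinOn_univ_iff.1 (hW p) 0
  have hinner := (abs_le.1 (abs_real_inner_le_norm p.2 (W p))).1
  have hcoer' := hcoer (p.1, W p)
  simp only [tiltedSlice, inner_zero_right, add_zero] at hmin hcoer'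
  have hp2 : ‖p.2‖ ≤ ρ := (norm_snd_le p).trans hp.le
  have hq : c * ‖W p‖ ^ 2 ≤ ρ * ‖W p‖ + D := by
    nlinarith [mul_le_mul_of_nonneg_right hp2 (norm_nonneg (W p))]
  rcases le_or_gt ‖W p‖ 1 with h1 | h1
  · linarith [div_nonneg (add_nonneg (abs_nonneg ρ) (abs_nonneg D)) hc.le]
  · have h2 : c * ‖W p‖ * ‖W p‖ ≤ (|ρ| + |D|) * ‖W p‖ := by
      nlinarith [mul_le_mul_of_nonneg_right (le_abs_self ρ) (norm_nonneg (W p)), le_abs_self D,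
        mul_le_mul_of_nonneg_left h1.le (abs_nonneg D)]
    have h3 := le_of_mul_le_mul_right h2 (by linarith)
    rw [← le_div_iff₀' hc] at h3
    linarith

lemma continuous_of_isMinOn_tiltedSlice [SeminormedAddCommGroup E] {m : ℝ} (hm : 0 < m)
    (hstrong : ∀ p, StrongConvexOn univ m (tiltedSlice ℓ p))
    (hlip : ∀ ρ, ∃ K, LipschitzOnWith K ℓ (ball 0 ρ)) {W : E × F → F}
    (hbound : ∀ ρ, ∃ R, ∀ p : E × F, ‖p‖ < ρ → ‖W p‖ ≤ R)
    (hW : ∀ p, IsMinOn (tiltedSlice ℓ p) univ (W p)) : Continuous W := by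
  refine continuous_iff_continuousAt.2 fun p₀ => ?_
  obtain ⟨R, hR⟩ := hbound (‖p₀‖ + 1)
  have hR₀ : 0 ≤ R := (norm_nonneg _).trans (hR p₀ (by linarith))
  obtain ⟨K, hK⟩ := hlip (‖p₀‖ + 1 + R)
  have hdiff : ∀ p : E × F, ‖p‖ < ‖p₀‖ + 1 → ∀ r : F, ‖r‖ ≤ R →
      |tiltedSlice ℓ p r - tiltedSlice ℓ p₀ r| ≤ (K + R) * ‖p - p₀‖ := by
    intro p hp r hr
    have hmem : ∀ q : E × F, ‖q‖ < ‖p₀‖ + 1 → (q.1, r) ∈ ball (0 : E × F) (‖p₀‖ + 1 + R) := by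
      intro q hq
      rw [mem_ball_zero_iff, Prod.norm_def]
      exact max_lt (by linarith [norm_fst_le q]) (by dsimp only; linarith [norm_nonneg p₀])
    have hℓ : |ℓ (p.1, r) - ℓ (p₀.1, r)| ≤ K * ‖p - p₀‖ := by
      have := hK.dist_le_mul _ (hmem p hp) _ (hmem p₀ (by linarith))
      rw [Real.dist_eq, dist_prod_same_right, dist_eq_norm] at this
      exact this.trans (mul_le_mul_of_nonneg_left (norm_fst_le (p - p₀)) K.2)
    have hinner : |⟪p.2 - p₀.2, r⟫| ≤ R * ‖p - p₀‖ :=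
      (abs_real_inner_le_norm _ _).trans (by
        rw [mul_comm]
        exact mul_le_mul hr (norm_snd_le (p - p₀)) (norm_nonneg _) hR₀)
    rw [inner_sub_left] at hinner
    simp only [tiltedSlice]
    calc |ℓ (p.1, r) + ⟪p.2, r⟫ - (ℓ (p₀.1, r) + ⟪p₀.2, r⟫)|
        = |(ℓ (p.1, r) - ℓ (p₀.1, r)) + (⟪p.2, r⟫ - ⟪p₀.2, r⟫)| := by ring_nf
      _ ≤ _ := (abs_add_le _ _).trans (by linarith)
  refine continuousAt_of_eventually_dist_sq_le (4 * (K + R) / m) ?_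
  filter_upwards [ball_mem_nhds p₀ one_pos] with p hp
  rw [mem_ball, dist_eq_norm] at hp
  have hp' : ‖p‖ < ‖p₀‖ + 1 := by linarith [norm_le_norm_add_norm_sub' p p₀]
  have hstab := (hstrong p).sq_norm_sub_le_of_isMinOn_of_isMinOn (hstrong p₀) (hW p) (hW p₀)
  have h₁ := abs_le.1 (hdiff p hp' (W p) (hR p hp'))
  have h₂ := abs_le.1 (hdiff p hp' (W p₀) (hR p₀ (by linarith)))
  rw [dist_eq_norm, dist_eq_norm, div_mul_eq_mul_div, le_div_iff₀ hm]
  nlinarith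

end TiltedSlice

lemma isBounded_image_ball_of_quadratic_bounds {E F : Type*} [SeminormedAddCommGroup E]
    [SeminormedAddCommGroup F] {f : E × F → ℝ} {ε C : ℝ} (hε : 0 < ε)
    (hlow : ∀ z, ε / 4 * (‖z.1‖ ^ 2 + ‖z.2‖ ^ 2) - C ≤ f z)
    (hup : ∀ z, f z ≤ (‖z.1‖ ^ 2 + ‖z.2‖ ^ 2) / ε + C) (ρ : ℝ) :
    Bornology.IsBounded (f '' ball 0 ρ) := by
  refine isBounded_iff_bddBelow_bddAbove.2 ⟨⟨-C, ?_⟩, ⟨2 * ρ ^ 2 / ε + C, ?_⟩⟩ <;>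
    rintro _ ⟨z, hz, rfl⟩
  · nlinarith [hlow z, sq_nonneg ‖z.1‖, sq_nonneg ‖z.2‖]
  · rw [mem_ball_zero_iff] at hz
    have h₁ : ‖z.1‖ ^ 2 ≤ ρ ^ 2 := pow_le_pow_left₀ (norm_nonneg _) ((norm_fst_le z).trans hz.le) 2
    have h₂ : ‖z.2‖ ^ 2 ≤ ρ ^ 2 := pow_le_pow_left₀ (norm_nonneg _) ((norm_snd_le z).trans hz.le) 2
    have := div_le_div_of_nonneg_right (add_le_add h₁ h₂) hε.le
    linarith [hup z, show (ρ ^ 2 + ρ ^ 2) / ε = 2 * ρ ^ 2 / ε by ring]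

lemma memSubdiff2_coe_iff {H : Type*} [NormedAddCommGroup H] [InnerProductSpace ℝ H]
    {ℓ : H × H → ℝ} {a v y : H} :
    MemSubdiff2 (fun z => (ℓ z : EReal)) a v (-y) ↔ IsMinOn (tiltedSlice ℓ (a, y)) univ v := by
  simp only [MemSubdiff2, isMinOn_univ_iff, tiltedSlice, ← EReal.coe_add, EReal.coe_le_coe_iff,
    inner_neg_left, inner_sub_right]
  exact forall_congr' fun r => by constructor <;> intro h <;> linarith

theorem stmt8_general {H : Type*} [NormedAddCommGroup H] [InnerProductSpace ℝ H] [CompleteSpace H]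
    (L : H × H → EReal)
    (hconv : ERealConvexOn L)
    (hproper : ∃ z, L z ≠ ⊤)
    (hASD : IsASDH L)
    (ε : ℝ) (hε : 0 < ε)
    (hunif : ERealConvexOn (fun zp : H × H =>
      L zp - ((ε / 2 * (‖zp.1‖ ^ 2 + ‖zp.2‖ ^ 2) : ℝ) : EReal)))
    (T : ℝ)
    (u x v : ℝ → H)
    (hu : ContinuousOn u (Set.Icc 0 T))
    (hx : ContinuousOn x (Set.Icc 0 T))
    (hv : ∀ᵐ t ∂(volume.restrict (Set.Icc (0 : ℝ) T)),
      MemSubdiff2 L (u t) (v t) (-x t)) :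
    ∃ w : ℝ → H,
      ContinuousOn w (Set.Icc 0 T) ∧
      (∀ᵐ t ∂(volume.restrict (Set.Icc (0 : ℝ) T)), w t = v t) ∧
      (∀ t ∈ Set.Icc (0 : ℝ) T, MemSubdiff2 L (u t) (w t) (-x t)) := by
  obtain ⟨C, hlow⟩ := hASD.exists_quadratic_lower_bound hproper hε hunif
  have hup := hASD.le_of_quadratic_lower_bound hε hlow
  obtain ⟨ℓ, rfl⟩ : ∃ ℓ : H × H → ℝ, L = fun z => (ℓ z : EReal) :=
    ⟨fun z => (L z).toReal, funext fun z => (EReal.coe_toReal (ne_top_of_le_ne_top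
      (EReal.coe_ne_top _) (hup z)) (ne_bot_of_le_ne_bot (EReal.coe_ne_bot _) (hlow z))).symm⟩
  simp only [EReal.coe_le_coe_iff] at hlow hup
  simp only [← EReal.coe_sub, erealConvexOn_coe_iff] at hconv hunif
  have hstrong := strongConvexOn_tiltedSlice hunif
  have hlip : ∀ ρ, ∃ K, LipschitzOnWith K ℓ (ball 0 ρ) := fun ρ =>
    (hconv.subset (subset_univ _) (convex_ball 0 _)).exists_lipschitzOnWith_of_isBounded
      (lt_add_one ρ) (isBounded_image_ball_of_quadratic_bounds hε hlow hup _)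
  have hcoer : ∀ z : H × H, ε / 4 * ‖z.2‖ ^ 2 - C ≤ ℓ z := fun z => by
    nlinarith [hlow z, sq_nonneg ‖z.1‖]
  choose W hW using fun p => (hstrong p).exists_isMinOn hε
    (continuous_tiltedSlice (continuous_of_forall_lipschitzOnWith_ball hlip) p)
    (bddBelow_range_tiltedSlice (by positivity) hcoer p)
  have hWcont := continuous_of_isMinOn_tiltedSlice hε hstrong hlip
    (exists_bound_of_isMinOn_tiltedSlice (by positivity) hcoer hlip hW) hW
  refine ⟨fun t => W (u t, x t), hWcont.comp_continuousOn (hu.prodMk hx), ?_,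
    fun t _ => memSubdiff2_coe_iff.2 (hW _)⟩
  filter_upwards [hv] with t ht
  exact ((hstrong _).strictConvexOn hε).eq_of_isMinOn (hW _) (memSubdiff2_coe_iff.1 ht)
    (mem_univ _) (mem_univ _)

/-- regularity of flows for an ASD Lagrangian uniformly convex in both
variables: an a.e. solution `v` of `−x(t) ∈ ∂₂L(u(t),v(t))` has a continuous version
solving the inclusion everywhere. -/
theorem stmt8 {H : Type*} [NormedAddCommGroup H] [InnerProductSpace ℝ H] [CompleteSpace H]
    (L : H × H → EReal)
    (hconv : ERealConvexOn L)
    (hlsc : LowerSemicontinuous L)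
    (hproper : ∃ z, L z ≠ ⊤) (hreal : ∀ z, L z ≠ ⊥)
    (hASD : IsASDH L)
    (ε : ℝ) (hε : 0 < ε)
    (hunif : ERealConvexOn (fun zp : H × H =>
      L zp - ((ε / 2 * (‖zp.1‖ ^ 2 + ‖zp.2‖ ^ 2) : ℝ) : EReal)))
    (T : ℝ) (hT : 0 < T)
    (u x v : ℝ → H)
    (hu : ContinuousOn u (Set.Icc 0 T))
    (hx : ContinuousOn x (Set.Icc 0 T))
    (hv : ∀ᵐ t ∂(volume.restrict (Set.Icc (0 : ℝ) T)),
      MemSubdiff2 L (u t) (v t) (-x t)) :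
    ∃ w : ℝ → H,
      ContinuousOn w (Set.Icc 0 T) ∧
      (∀ᵐ t ∂(volume.restrict (Set.Icc (0 : ℝ) T)), w t = v t) ∧
      (∀ t ∈ Set.Icc (0 : ℝ) T, MemSubdiff2 L (u t) (w t) (-x t)) :=
  stmt8_general L hconv hproper hASD ε hε hunif T u x v hu hx hv
end
end

section
/- Let H be a real Hilbert space and L : H × H → ℝ ∪ {+∞} an anti-selfdual Lagrangian that is uniformly convex in the first variable. Suppose 0 ∈ Dom₁(∂L), i.e., there exist p, q ∈ H with (p,0) ∈ ∂L(0,q). Then there is a constant C > 0 (one may take C = (‖p‖ + ‖q‖)/2) such that for every λ > 0, every y_λ ∈ H satisfying −(y_λ, 0) ∈ ∂L_λ(0, y_λ) obeys ‖y_λ‖ ≤ C. -/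
open scoped RealInnerProductSpace NNReal

noncomputable section

/-!
Anti-selfduality gives `L(x, r) ≥ -⟪x, r⟫` everywhere, and combined with `(p, 0) ∈ ∂L(0, q)` it
forces `L(0, q) = L(0, -p) = 0`. Hence, with `r₀ = (q - p)/2`, convexity gives `L(0, r₀) ≤ 0`, while
`L(w, r) ≥ max(⟪p, w⟫, -⟪q, w⟫) ≥ ⟪-r₀, w⟫`. Testing `-(y, 0) ∈ ∂L_λ(0, y)` at the point
`(-λy, r₀)`, the linear lower bound controls `L_λ(0, y)` from below and `L(0, r₀) ≤ 0` controls
`L_λ(-λy, r₀)` from above; the quadratic terms leave `λ‖y‖² ≤ λ‖r₀‖²`.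
-/

namespace EReal

theorem coe_le_of_coe_two_mul_sub_le_self {a : ℝ} {b : EReal}
    (h : ((2 * a : ℝ) : EReal) - b ≤ b) : (a : EReal) ≤ b := by
  induction b using EReal.rec with
  | bot => rw [coe_sub_bot] at h; simp at h
  | top => exact le_top
  | coe b =>
    rw [← coe_sub, EReal.coe_le_coe_iff] at h
    exact EReal.coe_le_coe_iff.mpr (by linarith)

theorem coe_sub_le_neg_of_add_coe_le {a : ℝ} {b c : EReal} (h : c + a ≤ b) :
    (a : EReal) - b ≤ -c := by
  induction b using EReal.rec with
  | bot =>
    rw [le_bot_iff, add_eq_bot_iff] at h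
    simp_all
  | top => simp [sub_top]
  | coe b =>
    induction c using EReal.rec with
    | bot => simp
    | top => simp at h
    | coe c =>
      rw [← coe_add, EReal.coe_le_coe_iff] at h
      rw [← coe_sub, ← coe_neg, EReal.coe_le_coe_iff]
      linarith

end EReal

theorem ERealConvexOn.apply_half_smul_add_half_smul_le_zero {E : Type*} [AddCommGroup E]
    [Module ℝ E] {f : E → EReal} (hf : ERealConvexOn f) {x y : E} (hx : f x ≤ 0)
    (hy : f y ≤ 0) : f ((1 / 2 : ℝ) • x + (1 / 2 : ℝ) • y) ≤ 0 := by
  have half_mul_nonpos {a : EReal} (ha : a ≤ 0) : ((1 / 2 : ℝ) : EReal) * a ≤ 0 :=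
    EReal.mul_nonpos_iff.mpr (Or.inl ⟨by norm_num, ha⟩)
  calc f ((1 / 2 : ℝ) • x + (1 / 2 : ℝ) • y)
      ≤ ((1 / 2 : ℝ) : EReal) * f x + ((1 / 2 : ℝ) : EReal) * f y :=
        hf x y _ _ (by norm_num) (by norm_num) (by norm_num)
    _ ≤ 0 := add_nonpos (half_mul_nonpos hx) (half_mul_nonpos hy)

section Lagrangian

variable {H : Type*} [NormedAddCommGroup H] [InnerProductSpace ℝ H] {L : H × H → EReal}

theorem MemSubdiff.apply_add_inner_le {p q : H} (h : MemSubdiff L 0 q p 0) (z r : H) :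
    L (0, q) + ((⟪p, z⟫ : ℝ) : EReal) ≤ L (z, r) := by
  simpa using h z r

namespace IsASDH

theorem coe_inner_sub_le (hL : IsASDH L) (x p z r : H) :
    ((⟪-r, x⟫ + ⟪-z, p⟫ : ℝ) : EReal) - L (x, p) ≤ L (z, r) := by
  have h := hL (-r) (-z)
  rw [neg_neg, neg_neg] at h
  rw [← h]
  exact le_iSup₂ (f := fun x p => ((⟪-r, x⟫ + ⟪-z, p⟫ : ℝ) : EReal) - L (x, p)) x p

theorem neg_inner_le_s13 (hL : IsASDH L) (z r : H) : ((-⟪z, r⟫ : ℝ) : EReal) ≤ L (z, r) := by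
  have h := hL.coe_inner_sub_le z r z r
  have hin : ⟪-r, z⟫ + ⟪-z, r⟫ = 2 * -⟪z, r⟫ := by
    rw [inner_neg_left, inner_neg_left, real_inner_comm r z]; ring
  rw [hin] at h
  exact EReal.coe_le_of_coe_two_mul_sub_le_self h

theorem apply_eq_zero_of_memSubdiff (hL : IsASDH L) {p q : H} (hpq : MemSubdiff L 0 q p 0) :
    L (0, q) = 0 ∧ L (0, -p) = 0 := by
  have hq_nonneg : 0 ≤ L (0, q) := by simpa using hL.neg_inner_le_s13 0 q
  have hp_nonneg : 0 ≤ L (0, -p) := by simpa using hL.neg_inner_le_s13 0 (-p)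
  -- `L(0, -p) = L*(p, 0)`, and `(p, 0) ∈ ∂L(0, q)` bounds every term of that supremum by `-L(0, q)`
  have hp_le : L (0, -p) ≤ -L (0, q) := by
    rw [← neg_zero, ← hL p 0]
    refine iSup₂_le fun x r => ?_
    simpa using EReal.coe_sub_le_neg_of_add_coe_le (hpq.apply_add_inner_le x r)
  have hq_zero : L (0, q) = 0 :=
    le_antisymm (EReal.neg_nonneg.mp (hp_nonneg.trans hp_le)) hq_nonneg
  exact ⟨hq_zero, le_antisymm (by simpa [hq_zero] using hp_le) hp_nonneg⟩

theorem coe_inner_half_smul_sub_le (hL : IsASDH L) {p q : H} (hpq : MemSubdiff L 0 q p 0)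
    (w r : H) : ((⟪(1 / 2 : ℝ) • (p - q), w⟫ : ℝ) : EReal) ≤ L (w, r) := by
  have hq_zero := (hL.apply_eq_zero_of_memSubdiff hpq).1
  have hp : ((⟪p, w⟫ : ℝ) : EReal) ≤ L (w, r) := by
    simpa [hq_zero] using hpq.apply_add_inner_le w r
  have hq : ((-⟪q, w⟫ : ℝ) : EReal) ≤ L (w, r) := by
    simpa [hq_zero, inner_neg_left, real_inner_comm w q] using hL.coe_inner_sub_le 0 q w r
  have hmean : ⟪(1 / 2 : ℝ) • (p - q), w⟫ ≤ max ⟪p, w⟫ (-⟪q, w⟫) := by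
    rw [real_inner_smul_left, inner_sub_left]
    rcases le_total ⟪p, w⟫ (-⟪q, w⟫) with h | h
    · rw [max_eq_right h]; linarith
    · rw [max_eq_left h]; linarith
  rcases le_max_iff.mp hmean with h | h
  · exact (EReal.coe_le_coe_iff.mpr h).trans hp
  · exact (EReal.coe_le_coe_iff.mpr h).trans hq

end IsASDH

theorem neg_mul_norm_sq_le_inner_add {lam : ℝ} (hlam : 0 < lam) (a v : H) :
    -(lam / 2 * ‖a‖ ^ 2) ≤ ⟪a, v⟫ + ‖v‖ ^ 2 / (2 * lam) := by
  have h := sq_nonneg ‖v + lam • a‖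
  rw [norm_add_sq_real, real_inner_smul_right, norm_smul, Real.norm_eq_abs, abs_of_pos hlam,
    real_inner_comm] at h
  have key : 0 ≤ (‖v‖ ^ 2 + 2 * (lam * ⟪a, v⟫) + (lam * ‖a‖) ^ 2) / (2 * lam) :=
    div_nonneg h (by positivity)
  have expand : (‖v‖ ^ 2 + 2 * (lam * ⟪a, v⟫) + (lam * ‖a‖) ^ 2) / (2 * lam)
      = ⟪a, v⟫ + ‖v‖ ^ 2 / (2 * lam) + lam / 2 * ‖a‖ ^ 2 := by
    field_simp; ring
  linarith

theorem coe_le_lagReg_of_coe_inner_le {lam : ℝ} (hlam : 0 < lam) {a : H}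
    (ha : ∀ w r, ((⟪a, w⟫ : ℝ) : EReal) ≤ L (w, r)) (x y : H) :
    ((⟪a, x⟫ - lam / 2 * ‖a‖ ^ 2 + lam / 2 * ‖y‖ ^ 2 : ℝ) : EReal) ≤ lagReg lam L x y := by
  rw [lagReg, EReal.coe_add]
  refine add_le_add (le_iInf fun w => ?_) le_rfl
  have h := neg_mul_norm_sq_le_inner_add hlam a (w - x)
  rw [norm_sub_rev, inner_sub_right] at h
  calc ((⟪a, x⟫ - lam / 2 * ‖a‖ ^ 2 : ℝ) : EReal)
      ≤ ((⟪a, w⟫ + ‖x - w‖ ^ 2 / (2 * lam) : ℝ) : EReal) := EReal.coe_le_coe_iff.mpr (by linarith)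
    _ ≤ L (w, y) + ((‖x - w‖ ^ 2 / (2 * lam) : ℝ) : EReal) := by
      rw [EReal.coe_add]; exact add_le_add (ha w y) le_rfl

theorem lagReg_le (lam : ℝ) (L : H × H → EReal) (x z p : H) :
    lagReg lam L x p ≤ L (z, p) + ((‖x - z‖ ^ 2 / (2 * lam) + lam / 2 * ‖p‖ ^ 2 : ℝ) : EReal) := by
  rw [lagReg, EReal.coe_add, ← add_assoc]
  exact add_le_add (iInf_le _ z) le_rfl

theorem norm_sq_le_of_memSubdiff_lagReg {lam : ℝ} (hlam : 0 < lam) {a b y : H}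
    (ha : ∀ w r, ((⟪a, w⟫ : ℝ) : EReal) ≤ L (w, r)) (hb : L (0, b) ≤ 0)
    (hy : MemSubdiff (fun zp : H × H => lagReg lam L zp.1 zp.2) 0 y (-y) 0) :
    ‖y‖ ^ 2 ≤ (‖a‖ ^ 2 + ‖b‖ ^ 2) / 2 := by
  have htest : lagReg lam L 0 y + ((lam * ‖y‖ ^ 2 : ℝ) : EReal) ≤ lagReg lam L (-(lam • y)) b := by
    have h := hy (-(lam • y)) b
    have hin : ⟪-y, -(lam • y) - 0⟫ + ⟪(0 : H), b - y⟫ = lam * ‖y‖ ^ 2 := by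
      simp [real_inner_smul_right]
    rwa [hin] at h
  have hupper : lagReg lam L (-(lam • y)) b ≤ ((lam / 2 * ‖y‖ ^ 2 + lam / 2 * ‖b‖ ^ 2 : ℝ) : EReal) := by
    have hnorm : ‖-(lam • y) - 0‖ ^ 2 / (2 * lam) = lam / 2 * ‖y‖ ^ 2 := by
      rw [sub_zero, norm_neg, norm_smul, Real.norm_eq_abs, abs_of_pos hlam]
      field_simp
    calc lagReg lam L (-(lam • y)) b
        ≤ L (0, b) + ((lam / 2 * ‖y‖ ^ 2 + lam / 2 * ‖b‖ ^ 2 : ℝ) : EReal) := by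
          simpa only [hnorm] using lagReg_le lam L (-(lam • y)) 0 b
      _ ≤ _ := add_le_of_nonpos_left hb
  have hchain := calc
    ((-(lam / 2 * ‖a‖ ^ 2) + lam / 2 * ‖y‖ ^ 2 + lam * ‖y‖ ^ 2 : ℝ) : EReal)
        ≤ lagReg lam L 0 y + ((lam * ‖y‖ ^ 2 : ℝ) : EReal) := by
          rw [EReal.coe_add]
          simpa using add_le_add (coe_le_lagReg_of_coe_inner_le hlam ha 0 y) le_rfl
    _ ≤ _ := htest.trans hupper
  rw [EReal.coe_le_coe_iff] at hchain
  nlinarith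

end Lagrangian

theorem IsASDH.norm_le_of_memSubdiff_lagReg {H : Type*} [NormedAddCommGroup H]
    [InnerProductSpace ℝ H] {L : H × H → EReal} (hconv : ERealConvexOn L) (hL : IsASDH L)
    {p q : H} (hpq : MemSubdiff L 0 q p 0) {lam : ℝ} (hlam : 0 < lam) {y : H}
    (hy : MemSubdiff (fun zp : H × H => lagReg lam L zp.1 zp.2) 0 y (-y) 0) :
    ‖y‖ ≤ (‖p‖ + ‖q‖) / 2 := by
  obtain ⟨hq_zero, hp_zero⟩ := hL.apply_eq_zero_of_memSubdiff hpq
  have hmid : L (0, (1 / 2 : ℝ) • (q - p)) ≤ 0 := by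
    simpa [smul_sub, sub_eq_add_neg] using
      hconv.apply_half_smul_add_half_smul_le_zero hq_zero.le hp_zero.le
  have hsq := norm_sq_le_of_memSubdiff_lagReg hlam (hL.coe_inner_half_smul_sub_le hpq) hmid hy
  rw [← norm_neg ((1 / 2 : ℝ) • (p - q)), ← smul_neg, neg_sub, add_self_div_two] at hsq
  calc ‖y‖ ≤ ‖(1 / 2 : ℝ) • (q - p)‖ := (sq_le_sq₀ (norm_nonneg _) (norm_nonneg _)).mp hsq
    _ = ‖q - p‖ / 2 := by rw [norm_smul]; norm_num; ring
    _ ≤ (‖p‖ + ‖q‖) / 2 := by linarith [norm_sub_le q p]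

theorem stmt13_general {H : Type*} [NormedAddCommGroup H] [InnerProductSpace ℝ H]
    (L : H × H → EReal)
    (hconv : ERealConvexOn L)
    (hASD : IsASDH L)
    (p q : H) (hpq : MemSubdiff L 0 q p 0) :
    (∃ C : ℝ, 0 < C ∧
      ∀ lam : ℝ, 0 < lam → ∀ ylam : H,
        MemSubdiff (fun zp : H × H => lagReg lam L zp.1 zp.2) 0 ylam (-ylam) 0 →
        ‖ylam‖ ≤ C) ∧
    -- one may take `C = (‖p‖ + ‖q‖)/2`
    (∀ lam : ℝ, 0 < lam → ∀ ylam : H,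
      MemSubdiff (fun zp : H × H => lagReg lam L zp.1 zp.2) 0 ylam (-ylam) 0 →
      ‖ylam‖ ≤ (‖p‖ + ‖q‖) / 2) := by
  have hbound := fun lam hlam ylam hy ↦
    hASD.norm_le_of_memSubdiff_lagReg (lam := lam) (y := ylam) hconv hpq hlam hy
  refine ⟨⟨(‖p‖ + ‖q‖) / 2 + 1, by positivity, fun lam hlam ylam hy ↦ ?_⟩, hbound⟩
  linarith [hbound lam hlam ylam hy]

/-- if `0 ∈ Dom₁(∂L)` (witnessed by `(p,0) ∈ ∂L(0,q)`), then solutions `y_λ` of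
`−(y_λ,0) ∈ ∂L_λ(0,y_λ)` are bounded uniformly in `λ > 0`; one may take the bound
`C = (‖p‖ + ‖q‖)/2`. -/
theorem stmt13 {H : Type*} [NormedAddCommGroup H] [InnerProductSpace ℝ H] [CompleteSpace H]
    (L : H × H → EReal)
    (hconv : ERealConvexOn L)
    (hlsc : LowerSemicontinuous L)
    (hproper : ∃ z, L z ≠ ⊤) (hreal : ∀ z, L z ≠ ⊥)
    (hASD : IsASDH L)
    (ε : ℝ) (hε : 0 < ε)
    (hunif : ∀ p : H, ERealConvexOn (fun x : H =>
      L (x, p) - ((ε / 2 * ‖x‖ ^ 2 : ℝ) : EReal)))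
    (p q : H) (hpq : MemSubdiff L 0 q p 0) :
    (∃ C : ℝ, 0 < C ∧
      ∀ lam : ℝ, 0 < lam → ∀ ylam : H,
        MemSubdiff (fun zp : H × H => lagReg lam L zp.1 zp.2) 0 ylam (-ylam) 0 →
        ‖ylam‖ ≤ C) ∧
    -- one may take `C = (‖p‖ + ‖q‖)/2`
    (∀ lam : ℝ, 0 < lam → ∀ ylam : H,
      MemSubdiff (fun zp : H × H => lagReg lam L zp.1 zp.2) 0 ylam (-ylam) 0 →
      ‖ylam‖ ≤ (‖p‖ + ‖q‖) / 2) :=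
  stmt13_general L hconv hASD p q hpq
end
end

section
/- Let H be a real Hilbert space, L : H × H → ℝ ∪ {+∞} an anti-selfdual Lagrangian, and ω ∈ ℝ. If x, y ∈ A²_H([0,T]) both satisfy the differential inclusion −(u̇(t) + ω u(t), u(t)) ∈ ∂L(u(t), u̇(t) + ω u(t)) for almost every t ∈ [0,T], then ‖x(t) − y(t)‖ ≤ e^{−ωt}‖x(0) − y(0)‖ for every t ∈ [0,T]. In particular, the flow map x(0) ↦ x(t) is a contraction for ω > 0 and is 1-Lipschitz for ω = 0. -/
open scoped RealInnerProductSpace NNReal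

noncomputable section

open MeasureTheory

/-- `u ∈ A²_H([0,T])` with derivative `du`: `du ∈ L²` and `u(t) = u(0) + ∫₀ᵗ du`. -/
def A2Path {H : Type*} [NormedAddCommGroup H] [InnerProductSpace ℝ H] [CompleteSpace H]
    (T : ℝ) (u du : ℝ → H) : Prop :=
  MemLp du 2 (volume.restrict (Set.Icc 0 T)) ∧
  ∀ t ∈ Set.Icc (0 : ℝ) T, u t = u 0 + ∫ s in (0 : ℝ)..t, du s

/-!
The subdifferential of any function is a monotone relation, so two solutions of the inclusion
satisfy `⟪ẋ - ẏ, x - y⟫ + ω ‖x - y‖² ≤ 0` almost everywhere. Hence `t ↦ e^{2ωt} ‖x(t) - y(t)‖²`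
is absolutely continuous with almost everywhere nonpositive derivative, so it is nonincreasing.
-/

open Set Filter

theorem AbsolutelyContinuousOnInterval.of_dist_le_mul {X Y : Type*} [PseudoMetricSpace X]
    [PseudoMetricSpace Y] {f : ℝ → X} {g : ℝ → Y} {a b C : ℝ}
    (hg : AbsolutelyContinuousOnInterval g a b)
    (hfg : ∀ s ∈ uIcc a b, ∀ t ∈ uIcc a b, dist (f s) (f t) ≤ C * dist (g s) (g t)) :
    AbsolutelyContinuousOnInterval f a b := by
  unfold AbsolutelyContinuousOnInterval at hg ⊢
  have hCg := hg.const_mul C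
  rw [mul_zero] at hCg
  refine squeeze_zero' (Eventually.of_forall fun _ => Finset.sum_nonneg fun _ _ => dist_nonneg)
    ?_ hCg
  filter_upwards [mem_inf_of_right (mem_principal_self _)] with E hE
  rw [Finset.mul_sum]
  exact Finset.sum_le_sum fun i hi => hfg _ (hE.1 i hi).1 _ (hE.1 i hi).2

theorem AbsolutelyContinuousOnInterval.norm_sq {E : Type*} [SeminormedAddCommGroup E]
    {f : ℝ → E} {a b : ℝ} (hf : AbsolutelyContinuousOnInterval f a b) :
    AbsolutelyContinuousOnInterval (‖f ·‖ ^ 2) a b := by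
  obtain ⟨M, hM⟩ := hf.exists_bound
  refine hf.of_dist_le_mul (C := 2 * M) fun s hs t ht => ?_
  have hsq : ‖f s‖ ^ 2 - ‖f t‖ ^ 2 = (‖f s‖ + ‖f t‖) * (‖f s‖ - ‖f t‖) := by ring
  rw [Real.dist_eq, hsq, abs_mul, abs_of_nonneg (by positivity), dist_eq_norm]
  exact mul_le_mul (by linarith [hM s hs, hM t ht]) (abs_norm_sub_norm_le _ _) (abs_nonneg _)
    (by linarith [hM s hs, norm_nonneg (f s)])

theorem IntervalIntegrable.absolutelyContinuousOnInterval_integral {E : Type*}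
    [NormedAddCommGroup E] [NormedSpace ℝ E] {f : ℝ → E} {a b c : ℝ}
    (hf : IntervalIntegrable f volume a b) (hc : c ∈ uIcc a b) :
    AbsolutelyContinuousOnInterval (fun x ↦ ∫ v in c..x, f v) a b := by
  refine (hf.norm.absolutelyContinuousOnInterval_intervalIntegral hc).of_dist_le_mul
    (C := 1) fun s hs t ht => ?_
  have hcs := hf.mono_set (uIcc_subset_uIcc hc hs)
  have hct := hf.mono_set (uIcc_subset_uIcc hc ht)
  rw [one_mul, dist_eq_norm, dist_eq_norm, intervalIntegral.integral_interval_sub_left hcs hct,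
    intervalIntegral.integral_interval_sub_left hcs.norm hct.norm, Real.norm_eq_abs]
  exact intervalIntegral.norm_integral_le_abs_integral_norm

theorem AbsolutelyContinuousOnInterval.le_of_ae_deriv_nonpos {f : ℝ → ℝ} {a b : ℝ} (hab : a ≤ b)
    (hf : AbsolutelyContinuousOnInterval f a b) (hf' : ∀ᵐ x, x ∈ Ioo a b → deriv f x ≤ 0) :
    f b ≤ f a := by
  have hf'_neg : 0 ≤ᵐ[volume.restrict (Icc a b)] fun x => -deriv f x := by
    rw [EventuallyLE, ← Measure.restrict_congr_set Ioo_ae_eq_Icc,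
      ae_restrict_iff' measurableSet_Ioo]
    filter_upwards [hf'] with x hx hmem using neg_nonneg.2 (hx hmem)
  have h := intervalIntegral.integral_nonneg_of_ae_restrict hab hf'_neg
  rw [intervalIntegral.integral_neg, hf.integral_deriv_eq_sub] at h
  linarith

section Primitive

variable {E : Type*} [NormedAddCommGroup E] [NormedSpace ℝ E]

theorem absolutelyContinuousOnInterval_of_eq_add_integral {u du : ℝ → E} {a b : ℝ}
    (hab : a ≤ b) (hdu : IntervalIntegrable du volume a b)
    (hu : ∀ t ∈ Icc a b, u t = u a + ∫ s in a..t, du s) :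
    AbsolutelyContinuousOnInterval u a b := by
  refine (hdu.absolutelyContinuousOnInterval_integral left_mem_uIcc).of_dist_le_mul
    (C := 1) fun s hs t ht => ?_
  rw [uIcc_of_le hab] at hs ht
  rw [one_mul, hu s hs, hu t ht, dist_add_left]

theorem ae_hasDerivAt_of_eq_add_integral [CompleteSpace E] {u du : ℝ → E} {a b : ℝ}
    (hdu : IntervalIntegrable du volume a b)
    (hu : ∀ t ∈ Icc a b, u t = u a + ∫ s in a..t, du s) :
    ∀ᵐ t, t ∈ Ioo a b → HasDerivAt u (du t) t := by
  filter_upwards [hdu.ae_hasDerivAt_integral] with t ht hmem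
  have hsub : Ioo a b ⊆ uIcc a b := Ioo_subset_Icc_self.trans Icc_subset_uIcc
  refine ((ht (hsub hmem) a left_mem_uIcc).const_add (u a)).congr_of_eventuallyEq ?_
  filter_upwards [Ioo_mem_nhds hmem.1 hmem.2] with s hs using hu s (Ioo_subset_Icc_self hs)

end Primitive

theorem norm_le_exp_mul_of_inner_add_mul_norm_sq_nonpos {H : Type*} [NormedAddCommGroup H]
    [InnerProductSpace ℝ H] [CompleteSpace H] {w dw : ℝ → H} {ω a b : ℝ} (hab : a ≤ b)
    (hdw : IntervalIntegrable dw volume a b) (hw : ∀ t ∈ Icc a b, w t = w a + ∫ s in a..t, dw s)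
    (hdiss : ∀ᵐ t, t ∈ Icc a b → ⟪dw t, w t⟫ + ω * ‖w t‖ ^ 2 ≤ 0) :
    ‖w b‖ ≤ Real.exp (-ω * (b - a)) * ‖w a‖ := by
  set ψ : ℝ → ℝ := fun t => Real.exp (2 * ω * t) * ‖w t‖ ^ 2
  have hψ : AbsolutelyContinuousOnInterval ψ a b :=
    ContDiffOn.absolutelyContinuousOnInterval (by fun_prop) |>.fun_mul
      (absolutelyContinuousOnInterval_of_eq_add_integral hab hdw hw).norm_sq
  have hψ' : ∀ᵐ t, t ∈ Ioo a b → deriv ψ t ≤ 0 := by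
    filter_upwards [ae_hasDerivAt_of_eq_add_integral hdw hw, hdiss] with t hderiv hdiss' ht
    have hψt : HasDerivAt ψ (2 * Real.exp (2 * ω * t) * (⟪dw t, w t⟫ + ω * ‖w t‖ ^ 2)) t :=
      (((hasDerivAt_id t).const_mul (2 * ω)).exp.mul (hderiv ht).norm_sq).congr_deriv (by
        rw [real_inner_comm, id, mul_one]
        ring)
    rw [hψt.deriv]
    exact mul_nonpos_of_nonneg_of_nonpos (by positivity) (hdiss' (Ioo_subset_Icc_self ht))
  have hψab := hψ.le_of_ae_deriv_nonpos hab hψ'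
  rw [← pow_le_pow_iff_left₀ (norm_nonneg _) (by positivity) two_ne_zero]
  calc ‖w b‖ ^ 2 = Real.exp (-(2 * ω * b)) * ψ b := by
        simp only [ψ, ← mul_assoc, ← Real.exp_add, neg_add_cancel, Real.exp_zero, one_mul]
    _ ≤ Real.exp (-(2 * ω * b)) * ψ a := by gcongr
    _ = (Real.exp (-ω * (b - a)) * ‖w a‖) ^ 2 := by
        simp only [ψ, mul_pow, ← Real.exp_nat_mul, ← mul_assoc, ← Real.exp_add]
        ring_nf

section Subdifferential

variable {H : Type*} [NormedAddCommGroup H] [InnerProductSpace ℝ H] {L : H × H → EReal}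

theorem MemSubdiff.ne_top {x p q y : H} {z : H × H} (h : MemSubdiff L x p q y) (hz : L z ≠ ⊤) :
    L (x, p) ≠ ⊤ := by
  intro htop
  have hz' := h z.1 z.2
  rw [htop, EReal.top_add_coe] at hz'
  exact hz (top_le_iff.mp hz')

theorem MemSubdiff.inner_sub_add_inner_sub_nonneg {x₁ p₁ q₁ y₁ x₂ p₂ q₂ y₂ : H}
    (h₁ : MemSubdiff L x₁ p₁ q₁ y₁) (h₂ : MemSubdiff L x₂ p₂ q₂ y₂)
    (htop : L (x₁, p₁) ≠ ⊤) (hbot : L (x₁, p₁) ≠ ⊥) :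
    0 ≤ ⟪q₁ - q₂, x₁ - x₂⟫ + ⟪y₁ - y₂, p₁ - p₂⟫ := by
  have hchain := (add_le_add_left (h₁ x₂ p₂) _).trans (h₂ x₁ p₁)
  rw [← EReal.coe_toReal htop hbot, ← EReal.coe_add, ← EReal.coe_add,
    EReal.coe_le_coe_iff] at hchain
  simp only [inner_sub_left, inner_sub_right] at hchain ⊢
  linarith

theorem inner_add_mul_norm_sq_nonpos_of_memSubdiff (hproper : ∃ z, L z ≠ ⊤)
    (hreal : ∀ z, L z ≠ ⊥) {x y dx dy : H} {ω : ℝ}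
    (hx : MemSubdiff L x (dx + ω • x) (-(dx + ω • x)) (-x))
    (hy : MemSubdiff L y (dy + ω • y) (-(dy + ω • y)) (-y)) :
    ⟪dx - dy, x - y⟫ + ω * ‖x - y‖ ^ 2 ≤ 0 := by
  obtain ⟨z, hz⟩ := hproper
  have hmono := hx.inner_sub_add_inner_sub_nonneg hy (hx.ne_top hz) (hreal _)
  have hdiff : dx + ω • x - (dy + ω • y) = (dx - dy) + ω • (x - y) := by
    rw [smul_sub]; abel
  rw [← neg_sub', ← neg_sub', hdiff, inner_neg_left, inner_neg_left, real_inner_comm _ (x - y),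
    inner_add_left, real_inner_smul_left, real_inner_self_eq_norm_sq] at hmono
  linarith

end Subdifferential

theorem A2Path.intervalIntegrable {H : Type*} [NormedAddCommGroup H] [InnerProductSpace ℝ H]
    [CompleteSpace H] {T t : ℝ} {u du : ℝ → H} (hu : A2Path T u du) (ht : t ∈ Icc 0 T) :
    IntervalIntegrable du volume 0 t := by
  have hdu : IntegrableOn du (uIcc 0 t) := by
    rw [uIcc_of_le ht.1]
    exact IntegrableOn.mono_set (hu.1.integrable one_le_two) (Icc_subset_Icc_right ht.2)
  exact hdu.intervalIntegrable

theorem A2Path.sub {H : Type*} [NormedAddCommGroup H] [InnerProductSpace ℝ H]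
    [CompleteSpace H] {T : ℝ} {x dx y dy : ℝ → H} (hx : A2Path T x dx) (hy : A2Path T y dy) :
    A2Path T (x - y) (dx - dy) := by
  refine ⟨hx.1.sub hy.1, fun t ht => ?_⟩
  simp only [Pi.sub_apply, hx.2 t ht, hy.2 t ht,
    intervalIntegral.integral_sub (hx.intervalIntegrable ht) (hy.intervalIntegrable ht)]
  abel

theorem stmt16_general {H : Type*} [NormedAddCommGroup H] [InnerProductSpace ℝ H] [CompleteSpace H]
    (L : H × H → EReal)
    (hproper : ∃ z, L z ≠ ⊤) (hreal : ∀ z, L z ≠ ⊥)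
    (ω T : ℝ)
    (x dx y dy : ℝ → H)
    (hx : A2Path T x dx) (hy : A2Path T y dy)
    (hxsol : ∀ᵐ t ∂(volume.restrict (Set.Icc (0 : ℝ) T)),
      MemSubdiff L (x t) (dx t + ω • x t) (-(dx t + ω • x t)) (-(x t)))
    (hysol : ∀ᵐ t ∂(volume.restrict (Set.Icc (0 : ℝ) T)),
      MemSubdiff L (y t) (dy t + ω • y t) (-(dy t + ω • y t)) (-(y t))) :
    ∀ t ∈ Set.Icc (0 : ℝ) T, ‖x t - y t‖ ≤ Real.exp (-ω * t) * ‖x 0 - y 0‖ := by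
  intro t ht
  have hdiss : ∀ᵐ s, s ∈ Icc 0 T → ⟪dx s - dy s, x s - y s⟫ + ω * ‖x s - y s‖ ^ 2 ≤ 0 := by
    rw [← ae_restrict_iff' measurableSet_Icc]
    filter_upwards [hxsol, hysol] with s hxs hys
    exact inner_add_mul_norm_sq_nonpos_of_memSubdiff hproper hreal hxs hys
  have hsub : Icc 0 t ⊆ Icc 0 T := Icc_subset_Icc_right ht.2
  have hxy := hx.sub hy
  simpa using norm_le_exp_mul_of_inner_add_mul_norm_sq_nonpos ht.1 (hxy.intervalIntegrable ht)
    (fun s hs => hxy.2 s (hsub hs)) (by filter_upwards [hdiss] with s hs hst using hs (hsub hst))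

/-- two solutions of the evolution inclusion associated to an ASD Lagrangian
satisfy `‖x(t) − y(t)‖ ≤ e^{−ωt} ‖x(0) − y(0)‖`; in particular the flow is a contraction for
`ω > 0` and `1`-Lipschitz for `ω = 0`. -/
theorem stmt16 {H : Type*} [NormedAddCommGroup H] [InnerProductSpace ℝ H] [CompleteSpace H]
    (L : H × H → EReal)
    (hconv : ERealConvexOn L)
    (hlsc : LowerSemicontinuous L)
    (hproper : ∃ z, L z ≠ ⊤) (hreal : ∀ z, L z ≠ ⊥)
    (hASD : IsASDH L)
    (ω T : ℝ) (hT : 0 < T)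
    (x dx y dy : ℝ → H)
    (hx : A2Path T x dx) (hy : A2Path T y dy)
    (hxsol : ∀ᵐ t ∂(volume.restrict (Set.Icc (0 : ℝ) T)),
      MemSubdiff L (x t) (dx t + ω • x t) (-(dx t + ω • x t)) (-(x t)))
    (hysol : ∀ᵐ t ∂(volume.restrict (Set.Icc (0 : ℝ) T)),
      MemSubdiff L (y t) (dy t + ω • y t) (-(dy t + ω • y t)) (-(y t))) :
    ∀ t ∈ Set.Icc (0 : ℝ) T, ‖x t - y t‖ ≤ Real.exp (-ω * t) * ‖x 0 - y 0‖ :=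
  stmt16_general L hproper hreal ω T x dx y dy hx hy hxsol hysol
end
end
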